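/- arXiv:2509.05808 — 2 statements merged into one kernel-verified Lean document; each statement's English description precedes it below -/
import Mathlib

section
/- Let K¹ ⊆ Δ^{d¹} and K²ʲ ⊆ Δ^{d²ʲ} for j = 1,…,n be nonempty compact convex sets, and let W ∈ R^{n×d¹} be the identity-like aggregation (d¹ = n, W = I). Define K = { blkdiag(k²¹,…,k²ⁿ) · k¹ : k¹ ∈ K¹, k²ʲ ∈ K²ʲ }, where blkdiag(k²¹,…,k²ⁿ) stacks the vectors k²ʲ as diagonal blocks. Then K is convex. -/
/-! Mix two points of `K` with weights `a, b`. In block `j` this gives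
`(a k¹ⱼ) • k²ʲ + (b l¹ⱼ) • l²ʲ`; the coefficients are nonnegative because `K¹` lies in the simplex,
so by convexity of `K²ʲ` the block equals `(a k¹ⱼ + b l¹ⱼ) • w²ʲ` for some `w²ʲ ∈ K²ʲ`, and the
outer weights `a • k¹ + b • l¹` lie in `K¹` by convexity. -/

theorem admissible_set_convex_general (n : ℕ) (d : Fin n → ℕ)
    (K1 : Set (Fin n → ℝ)) (K2 : ∀ j : Fin n, Set (Fin (d j) → ℝ))
    (hK1sub : K1 ⊆ stdSimplex ℝ (Fin n))
    (hK1conv : Convex ℝ K1) (hK2conv : ∀ j, Convex ℝ (K2 j)) :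
    Convex ℝ {x : (Σ j : Fin n, Fin (d j)) → ℝ |
      ∃ k1 ∈ K1, ∃ k2 : ∀ j : Fin n, Fin (d j) → ℝ,
        (∀ j, k2 j ∈ K2 j) ∧ x = fun p => k2 p.1 p.2 * k1 p.1} := by
  rintro _ ⟨k1, hk1, k2, hk2, rfl⟩ _ ⟨l1, hl1, l2, hl2, rfl⟩ a b ha hb hab
  have hblock : ∀ j, ∃ w ∈ K2 j,
      (a * k1 j + b * l1 j) • w = (a * k1 j) • k2 j + (b * l1 j) • l2 j := fun j =>
    (hK2conv j).exists_mem_add_smul_eq (hk2 j) (hl2 j)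
      (mul_nonneg ha ((hK1sub hk1).1 j)) (mul_nonneg hb ((hK1sub hl1).1 j))
  choose w hwK hw using hblock
  refine ⟨a • k1 + b • l1, hK1conv hk1 hl1 ha hb hab, w, hwK, ?_⟩
  funext ⟨j, i⟩
  have hwi := congrFun (hw j) i
  simp only [Pi.add_apply, Pi.smul_apply, smul_eq_mul] at hwi ⊢
  linear_combination -hwi

/-- Convexity of the two-layer admissible set (with identity aggregation `W = I`):
`K = { blkdiag(k²¹,…,k²ⁿ) · k¹ : k¹ ∈ K¹, k²ʲ ∈ K²ʲ }` is convex. -/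
theorem admissible_set_convex (n : ℕ) (d : Fin n → ℕ)
    (K1 : Set (Fin n → ℝ)) (K2 : ∀ j : Fin n, Set (Fin (d j) → ℝ))
    (hK1sub : K1 ⊆ stdSimplex ℝ (Fin n))
    (hK2sub : ∀ j, K2 j ⊆ stdSimplex ℝ (Fin (d j)))
    (hK1ne : K1.Nonempty) (hK2ne : ∀ j, (K2 j).Nonempty)
    (hK1comp : IsCompact K1) (hK2comp : ∀ j, IsCompact (K2 j))
    (hK1conv : Convex ℝ K1) (hK2conv : ∀ j, Convex ℝ (K2 j)) :
    Convex ℝ {x : (Σ j : Fin n, Fin (d j)) → ℝ |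
      ∃ k1 ∈ K1, ∃ k2 : ∀ j : Fin n, Fin (d j) → ℝ,
        (∀ j, k2 j ∈ K2 j) ∧ x = fun p => k2 p.1 p.2 * k1 p.1} :=
  admissible_set_convex_general n d K1 K2 hK1sub hK1conv hK2conv
end

section
/- Suppose the block-diagonal matrices K^i = blkdiag(k^{i,1},…,k^{i,n^i}) with k^{i,j} ∈ Δ^{d^{i,j}}, and aggregation matrices W^i that are entrywise nonnegative with 1ᵀW^i = 1ᵀ, and that the first-layer inequality (K¹ − T̄¹)ᵀ π̄¹ ≤ 0 and second-layer inequalities (K² − T̄²)ᵀ π̄² ⪯ 0 (entrywise) hold, where π̄¹ = (W¹)ᵀ(T̄²)ᵀ π̄². Then (K²W¹K¹ − T̄²W¹T̄¹)ᵀ π̄² ≤ 0 for all admissible K¹, K². -/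
/-!
Split the layer-2 change `K²W¹K¹ − T̄²W¹T̄¹` as `K²(W¹K¹) − T̄²(W¹K¹) + T̄²(W¹K¹ − W¹T̄¹)`.
Paired with `π̄²`, the first part is a nonnegative combination (weights `W¹K¹ ⪰ 0`) of the
layer-2 inequalities, and transposing `W¹` turns the second part into `(K¹ − T̄¹)ᵀπ̄¹`,
which the layer-1 inequality bounds.
-/

open Finset Matrix

theorem sum_sigma_mul_sub_mul_eq {R ι : Type*} [CommRing R] [Fintype ι] {κ : ι → Type*}
    [∀ j, Fintype (κ j)] (u v : ∀ j, κ j → R) (x y : ι → R) (p : (Σ j, κ j) → R) :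
    ∑ q : Σ j, κ j, (u q.1 q.2 * x q.1 - v q.1 q.2 * y q.1) * p q
      = ∑ j, x j * ∑ l, (u j l - v j l) * p ⟨j, l⟩
        + ∑ j, (x j - y j) * ∑ l, v j l * p ⟨j, l⟩ := by
  rw [Fintype.sum_sigma, ← sum_add_distrib]
  refine sum_congr rfl fun j _ => ?_
  rw [mul_sum, mul_sum, ← sum_add_distrib]
  exact sum_congr rfl fun l _ => by ring

theorem Matrix.sum_mulVec_sub_mulVec_mul_eq {R m n : Type*} [CommRing R] [Fintype m]
    [Fintype n] (W : Matrix m n R) (k t : n → R) (c : m → R) :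
    ∑ j, ((W *ᵥ k) j - (W *ᵥ t) j) * c j = ∑ i, (k i - t i) * ∑ j, W j i * c j := by
  simp only [mulVec, dotProduct, ← sum_sub_distrib, sum_mul, mul_sum]
  rw [sum_comm]
  exact sum_congr rfl fun i _ => sum_congr rfl fun j _ => by ring

theorem two_layer_rest_point_ineq_general (n1 n2 : ℕ) (d : Fin n2 → ℕ)
    (W : Matrix (Fin n2) (Fin n1) ℝ)
    (hW0 : ∀ j i, 0 ≤ W j i)
    (t1 : Fin n1 → ℝ)
    (t2 : ∀ j : Fin n2, Fin (d j) → ℝ)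
    (π2 : (Σ j : Fin n2, Fin (d j)) → ℝ)
    (π1 : Fin n1 → ℝ)
    (hπ1 : π1 = fun i => ∑ j, W j i * ∑ l, t2 j l * π2 ⟨j, l⟩)
    (h1 : ∀ k1 ∈ stdSimplex ℝ (Fin n1), ∑ i, (k1 i - t1 i) * π1 i ≤ 0)
    (h2 : ∀ j : Fin n2, ∀ k2j ∈ stdSimplex ℝ (Fin (d j)),
      ∑ l, (k2j l - t2 j l) * π2 ⟨j, l⟩ ≤ 0) :
    ∀ k1 ∈ stdSimplex ℝ (Fin n1),
      ∀ k2 : ∀ j : Fin n2, Fin (d j) → ℝ, (∀ j, k2 j ∈ stdSimplex ℝ (Fin (d j))) →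
        ∑ q : Σ j : Fin n2, Fin (d j),
          (k2 q.1 q.2 * W.mulVec k1 q.1 - t2 q.1 q.2 * W.mulVec t1 q.1) * π2 q ≤ 0 := by
  intro k1 hk1 k2 hk2
  rw [sum_sigma_mul_sub_mul_eq]
  have layer2 : ∑ j, (W *ᵥ k1) j * ∑ l, (k2 j l - t2 j l) * π2 ⟨j, l⟩ ≤ 0 :=
    sum_nonpos fun j _ => mul_nonpos_of_nonneg_of_nonpos
      (dotProduct_nonneg_of_nonneg (hW0 j) hk1.1) (h2 j (k2 j) (hk2 j))
  have layer1 : ∑ j, ((W *ᵥ k1) j - (W *ᵥ t1) j) * ∑ l, t2 j l * π2 ⟨j, l⟩ ≤ 0 := by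
    subst hπ1
    rw [sum_mulVec_sub_mulVec_mul_eq]
    exact h1 k1 hk1
  exact add_nonpos layer2 layer1

/-- Combining the layer-1 and layer-2 rest-point inequalities with the payoff
back-propagation yields `(K²W¹K¹ − T̄²W¹T̄¹)ᵀ π̄² ≤ 0` for all admissible `K¹, K²`. -/
theorem two_layer_rest_point_ineq (n1 n2 : ℕ) (d : Fin n2 → ℕ)
    (W : Matrix (Fin n2) (Fin n1) ℝ)
    (hW0 : ∀ j i, 0 ≤ W j i) (hW1 : ∀ i, ∑ j, W j i = 1)
    (t1 : Fin n1 → ℝ) (ht1 : t1 ∈ stdSimplex ℝ (Fin n1))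
    (t2 : ∀ j : Fin n2, Fin (d j) → ℝ) (ht2 : ∀ j, t2 j ∈ stdSimplex ℝ (Fin (d j)))
    (π2 : (Σ j : Fin n2, Fin (d j)) → ℝ)
    (π1 : Fin n1 → ℝ)
    (hπ1 : π1 = fun i => ∑ j, W j i * ∑ l, t2 j l * π2 ⟨j, l⟩)
    (h1 : ∀ k1 ∈ stdSimplex ℝ (Fin n1), ∑ i, (k1 i - t1 i) * π1 i ≤ 0)
    (h2 : ∀ j : Fin n2, ∀ k2j ∈ stdSimplex ℝ (Fin (d j)),
      ∑ l, (k2j l - t2 j l) * π2 ⟨j, l⟩ ≤ 0) :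
    ∀ k1 ∈ stdSimplex ℝ (Fin n1),
      ∀ k2 : ∀ j : Fin n2, Fin (d j) → ℝ, (∀ j, k2 j ∈ stdSimplex ℝ (Fin (d j))) →
        ∑ q : Σ j : Fin n2, Fin (d j),
          (k2 q.1 q.2 * W.mulVec k1 q.1 - t2 q.1 q.2 * W.mulVec t1 q.1) * π2 q ≤ 0 :=
  two_layer_rest_point_ineq_general n1 n2 d W hW0 t1 t2 π2 π1 hπ1 h1 h2
end
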